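/- arXiv:2603.12966 — 5 statements merged into one kernel-verified Lean document; each statement's English description precedes it below -/
import Mathlib

section
/- Let K be a field and A a unital commutative K-algebra such that the multiplication map A ⊗_K A → A is a bijection. If A is nonzero, then A is one-dimensional as a K-vector space, i.e., the structure map K → A is an isomorphism. -/
open scoped TensorProduct

/-- Let `K` be a field and `A` a nonzero unital commutative `K`-algebra such that the
multiplication map `A ⊗_K A → A` is bijective. Then the structure map `K → A` is an
isomorphism (so `A` is one-dimensional over `K`). -/
theorem stmt_8 (K : Type) [Field K] (A : Type) [CommRing A] [Algebra K A] [Nontrivial A]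
    (h : Function.Bijective (LinearMap.mul' K A)) :
    Function.Bijective (algebraMap K A) := by
  refine ⟨(algebraMap K A).injective, fun a => ?_⟩
  -- Key: a ⊗ 1 = 1 ⊗ a
  have key : (a ⊗ₜ[K] (1 : A)) = (1 : A) ⊗ₜ[K] a := by
    apply h.injective
    simp [LinearMap.mul'_apply]
  obtain ⟨q, hq⟩ := Submodule.exists_isCompl (K ∙ (1 : A))
  set π : A →ₗ[K] A := q.subtype ∘ₗ (q.projectionOnto _ hq.symm) with hπ
  have hπ1 : π 1 = 0 := by
    simp [hπ, Submodule.projectionOnto_apply_eq_zero_iff,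
      Submodule.mem_span_singleton_self]
  have h2 : (TensorProduct.map π LinearMap.id) (a ⊗ₜ[K] (1 : A))
      = (TensorProduct.map π LinearMap.id) ((1 : A) ⊗ₜ[K] a) := by rw [key]
  simp only [TensorProduct.map_tmul, LinearMap.id_apply, hπ1,
    TensorProduct.zero_tmul] at h2
  have h3 : π a = 0 := by
    have := congrArg (LinearMap.mul' K A) h2
    simpa [LinearMap.mul'_apply] using this
  -- decompose a
  have ha : a ∈ (K ∙ (1 : A)) ⊔ q := by rw [hq.sup_eq_top]; trivial
  obtain ⟨s, hs, w, hw, rfl⟩ := Submodule.mem_sup.mp ha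
  have hπs : π s = 0 := by
    simp [hπ, Submodule.projectionOnto_apply_eq_zero_iff, hs]
  have hπw : π w = w := by
    have := Submodule.projectionOnto_apply_left hq.symm ⟨w, hw⟩
    simp [hπ, this]
  have hw0 : w = 0 := by
    have := h3
    rw [map_add, hπs, hπw, zero_add] at this
    exact this
  obtain ⟨c, hc⟩ := Submodule.mem_span_singleton.mp hs
  exact ⟨c, by rw [hw0, add_zero, ← hc, Algebra.algebraMap_eq_smul_one]⟩
end

section
/- Let p be a prime and m ≥ 1. The ring Z[1/p][t]/(t^{p^m} - 1) is isomorphic to the product ring Z[ζ_{p^m}, 1/p] × Z[1/p][t]/(t^{p^{m-1}} - 1), where the first factor is Z[1/p][t]/(Φ_{p^m}(t)) and the projections are the natural quotient maps. -/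
open Polynomial

/-- Let `p` be prime, `m ≥ 1`, and `R = ℤ[1/p]` (the localization of `ℤ` away from `p`).
Then `R[t]/(t^{p^m} - 1) ≅ R[t]/(Φ_{p^m}(t)) × R[t]/(t^{p^{m-1}} - 1)`,
with the two projections given by the natural quotient maps. -/
theorem stmt_9 (p m : ℕ) (hp : p.Prime) (hm : 1 ≤ m)
    (R : Type) [CommRing R] [Algebra ℤ R] [IsLocalization.Away (p : ℤ) R] :
    ∃ e : (Polynomial R ⧸ Ideal.span {(X : Polynomial R) ^ (p ^ m) - 1}) ≃+*
        ((Polynomial R ⧸ Ideal.span {cyclotomic (p ^ m) R}) ×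
         (Polynomial R ⧸ Ideal.span {(X : Polynomial R) ^ (p ^ (m - 1)) - 1})),
      ∀ f : Polynomial R,
        e (Ideal.Quotient.mk (Ideal.span {(X : Polynomial R) ^ (p ^ m) - 1}) f) =
          (Ideal.Quotient.mk (Ideal.span {cyclotomic (p ^ m) R}) f,
           Ideal.Quotient.mk (Ideal.span {(X : Polynomial R) ^ (p ^ (m - 1)) - 1}) f) := by
  haveI : Fact p.Prime := ⟨hp⟩
  obtain ⟨n, rfl⟩ : ∃ n, m = n + 1 := ⟨m - 1, (Nat.succ_pred_eq_of_pos hm).symm⟩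
  -- p is a unit in R, hence in R[X]
  have hpu : IsUnit ((p : ℕ) : Polynomial R) := by
    have h1 : IsUnit (algebraMap ℤ R (p : ℤ)) := IsLocalization.Away.algebraMap_isUnit (p : ℤ)
    have h2 : IsUnit ((p : R)) := by
      rwa [show ((p : ℕ) : R) = algebraMap ℤ R (p : ℤ) by push_cast; simp]
    simpa [Polynomial.C_eq_natCast] using h2.map (C : R →+* Polynomial R)
  -- cyclotomic (p^(n+1)) ≡ p mod (X^{p^n} - 1)
  have hdvd : ((X : Polynomial R) ^ p ^ n - 1) ∣
      (cyclotomic (p ^ (n + 1)) R - (p : Polynomial R)) := by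
    rw [cyclotomic_prime_pow_eq_geom_sum hp]
    have : (cyclotomic (p ^ (n + 1)) R : Polynomial R) = cyclotomic (p ^ (n + 1)) R := rfl
    have hsum : (∑ i ∈ Finset.range p, ((X : Polynomial R) ^ p ^ n) ^ i) - (p : Polynomial R)
        = ∑ i ∈ Finset.range p, (((X : Polynomial R) ^ p ^ n) ^ i - 1) := by
      rw [Finset.sum_sub_distrib]
      simp
    rw [hsum]
    refine Finset.dvd_sum fun i _ => ?_
    simpa using sub_dvd_pow_sub_pow ((X : Polynomial R) ^ p ^ n) 1 i
  obtain ⟨q, hq⟩ := hdvd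
  have hcop : IsCoprime (cyclotomic (p ^ (n + 1)) R) ((X : Polynomial R) ^ p ^ n - 1) := by
    obtain ⟨w, hw⟩ := hpu.exists_left_inv
    refine ⟨w, -(w * q), ?_⟩
    have : cyclotomic (p ^ (n + 1)) R = (p : Polynomial R) +
        ((X : Polynomial R) ^ p ^ n - 1) * q := by linear_combination hq
    rw [this]; ring_nf; linear_combination hw
  have hIcop : IsCoprime (Ideal.span {cyclotomic (p ^ (n + 1)) R})
      (Ideal.span {(X : Polynomial R) ^ p ^ n - 1}) :=
    (Ideal.isCoprime_span_singleton_iff _ _).mpr hcop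
  have heq : Ideal.span {(X : Polynomial R) ^ p ^ (n + 1) - 1} =
      Ideal.span {cyclotomic (p ^ (n + 1)) R} * Ideal.span {(X : Polynomial R) ^ p ^ n - 1} := by
    rw [Ideal.span_singleton_mul_span_singleton, cyclotomic_prime_pow_mul_X_pow_sub_one]
  refine ⟨(Ideal.quotEquivOfEq heq).trans
    (Ideal.quotientMulEquivQuotientProd _ _ hIcop), fun f => ?_⟩
  ext <;> simp [Ideal.quotEquivOfEq_mk, Ideal.Quotient.factor_mk]
end

section
/- Let n be a positive integer and for each divisor k of n define ψ_k(t) = t(t^n - 1)/(n Φ_k(t)) · Φ_k'(t) in the ring Z[1/n][t]/(t^n - 1). Then the elements ψ_k are orthogonal idempotents summing to 1, and for any module M over Z[1/n][t]/(t^n - 1), the submodule ψ_n M equals { x ∈ M : Φ_n(t)·x = 0 }. -/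
open Polynomial

private theorem derivative_finset_prod' {R : Type*} [CommSemiring R] {ι : Type*} [DecidableEq ι]
    (s : Finset ι) (f : ι → R[X]) :
    derivative (∏ i ∈ s, f i) = ∑ i ∈ s, (∏ j ∈ s.erase i, f j) * derivative (f i) := by
  classical
  induction s using Finset.induction_on with
  | empty => simp
  | insert a s hi ih =>
    rw [Finset.prod_insert hi, derivative_mul, Finset.sum_insert hi,
      Finset.erase_insert hi, ih, Finset.mul_sum]
    congr 1
    · exact mul_comm _ _
    · refine Finset.sum_congr rfl fun j hj => ?_
      rw [Finset.erase_insert_of_ne (by rintro rfl; exact hi hj),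
        Finset.prod_insert (fun h => hi (Finset.mem_of_mem_erase h))]
      ring

/-- The idempotent `ψ_k(t) = t·(t^n - 1)/(n·Φ_k(t))·Φ_k'(t)` in `ℤ[1/n][t]/(t^n - 1)`,
where `R` is the localization of `ℤ` away from `n`. -/
noncomputable def psi (n : ℕ) (R : Type) [CommRing R] [Algebra ℤ R]
    [IsLocalization.Away (n : ℤ) R] (k : ℕ) :
    Polynomial R ⧸ Ideal.span {(X : Polynomial R) ^ n - 1} :=
  Ideal.Quotient.mk (Ideal.span {(X : Polynomial R) ^ n - 1})
    (C (IsLocalization.Away.invSelf (S := R) (n : ℤ)) * X *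
      (((X : Polynomial R) ^ n - 1) /ₘ cyclotomic k R) * derivative (cyclotomic k R))

/-- For `n ≥ 1`, the elements `ψ_k`, for `k ∣ n`, are orthogonal idempotents summing
to `1` in `ℤ[1/n][t]/(t^n - 1)`, and for every module `M` over this ring, `ψ_n M` equals
`{x ∈ M : Φ_n(t)·x = 0}`. -/
theorem stmt_10 (n : ℕ) (hn : 0 < n) (R : Type) [CommRing R] [Algebra ℤ R]
    [IsLocalization.Away (n : ℤ) R] :
    (∀ k ∈ n.divisors, psi n R k * psi n R k = psi n R k) ∧
    (∀ k ∈ n.divisors, ∀ l ∈ n.divisors, k ≠ l → psi n R k * psi n R l = 0) ∧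
    (∑ k ∈ n.divisors, psi n R k = 1) ∧
    (∀ (M : Type) [AddCommGroup M]
        [Module (Polynomial R ⧸ Ideal.span {(X : Polynomial R) ^ n - 1}) M] (x : M),
      (∃ y : M, x = psi n R n • y) ↔
        (Ideal.Quotient.mk (Ideal.span {(X : Polynomial R) ^ n - 1})
          (cyclotomic n R)) • x = 0) := by
  classical
  set f : R[X] := (X : R[X]) ^ n - 1 with hf
  set I : Ideal R[X] := Ideal.span {f} with hI
  set u : R := IsLocalization.Away.invSelf (S := R) (n : ℤ) with hu
  have hun : u * (n : R) = 1 := by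
    have := IsLocalization.Away.mul_invSelf (S := R) ((n : ℕ) : ℤ)
    rw [mul_comm] at this
    rw [← this, hu]
    congr 1
    simp
  have hprod : ∏ k ∈ n.divisors, cyclotomic k R = f :=
    prod_cyclotomic_eq_X_pow_sub_one hn R
  have hg : ∀ k ∈ n.divisors, f /ₘ cyclotomic k R =
      ∏ j ∈ n.divisors.erase k, cyclotomic j R := by
    intro k hk
    rw [← hprod, ← Finset.mul_prod_erase _ _ hk,
      mul_divByMonic_cancel_left _ (cyclotomic.monic k R)]
  have hfk : ∀ k ∈ n.divisors, cyclotomic k R * (f /ₘ cyclotomic k R) = f := by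
    intro k hk
    rw [hg k hk, Finset.mul_prod_erase n.divisors (fun j => cyclotomic j R) hk, hprod]
  -- orthogonality
  have horth : ∀ k ∈ n.divisors, ∀ l ∈ n.divisors, k ≠ l →
      psi n R k * psi n R l = 0 := by
    intro k hk l hl hkl
    have hlk : l ∈ n.divisors.erase k := Finset.mem_erase.mpr ⟨hkl.symm, hl⟩
    obtain ⟨c, hc⟩ : cyclotomic l R ∣ (f /ₘ cyclotomic k R) := by
      rw [hg k hk]; exact Finset.dvd_prod_of_mem _ hlk
    have hdvd : f ∣ (C u * X * (f /ₘ cyclotomic k R) * derivative (cyclotomic k R)) *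
        (C u * X * (f /ₘ cyclotomic l R) * derivative (cyclotomic l R)) := by
      refine ⟨C u * X * c * derivative (cyclotomic k R) *
        (C u * X * derivative (cyclotomic l R)), ?_⟩
      rw [hc]
      conv_rhs => rw [← hfk l hl]
      ring
    show Ideal.Quotient.mk I _ * Ideal.Quotient.mk I _ = 0
    rw [← map_mul, Ideal.Quotient.eq_zero_iff_mem, hI, Ideal.mem_span_singleton]
    exact hdvd
  -- sum
  have hsum : ∑ k ∈ n.divisors, psi n R k = 1 := by
    have hder : ∑ k ∈ n.divisors, (f /ₘ cyclotomic k R) * derivative (cyclotomic k R)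
        = C (n : R) * X ^ (n - 1) := by
      have := derivative_finset_prod' n.divisors (fun k => cyclotomic k R)
      rw [hprod] at this
      rw [Finset.sum_congr rfl (fun k hk => by rw [hg k hk]), ← this, hf,
        derivative_sub, derivative_one, derivative_X_pow, sub_zero]
    have : ∑ k ∈ n.divisors, (C u * X * (f /ₘ cyclotomic k R) * derivative (cyclotomic k R))
        = C u * X * (C (n : R) * X ^ (n - 1)) := by
      rw [← hder, Finset.mul_sum]
      exact Finset.sum_congr rfl fun k hk => by ring
    show ∑ k ∈ n.divisors, Ideal.Quotient.mk I _ = 1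
    rw [← map_sum, this]
    have hXp : (X : R[X]) * X ^ (n - 1) = X ^ n := by
      rw [← pow_succ']
      congr 1
      omega
    have hX : C u * X * (C (n : R) * X ^ (n - 1)) = C (u * n) * X ^ n := by
      rw [C_mul, ← hXp]; ring
    rw [hX, hun, C_1, one_mul]
    have : (Ideal.Quotient.mk I) (X ^ n) - 1 = Ideal.Quotient.mk I f := by
      rw [hf, map_sub, map_one]
    rw [← sub_eq_zero, this, Ideal.Quotient.eq_zero_iff_mem, hI]
    exact Ideal.subset_span rfl
  -- idempotency
  have hidem : ∀ k ∈ n.divisors, psi n R k * psi n R k = psi n R k := by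
    intro k hk
    conv_rhs => rw [← mul_one (psi n R k), ← hsum, Finset.mul_sum]
    rw [Finset.sum_eq_single k (fun l hl hlk => horth k hk l hl (Ne.symm hlk))
      (fun h => absurd hk h)]
  refine ⟨hidem, horth, hsum, ?_⟩
  intro M _ _ x
  have hnmem : n ∈ n.divisors := Nat.mem_divisors_self n hn.ne'
  constructor
  · rintro ⟨y, rfl⟩
    have hz : Ideal.Quotient.mk I (cyclotomic n R) * psi n R n = 0 := by
      show _ * Ideal.Quotient.mk I _ = 0
      rw [← map_mul, Ideal.Quotient.eq_zero_iff_mem, hI, Ideal.mem_span_singleton]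
      refine ⟨C u * X * derivative (cyclotomic n R), ?_⟩
      conv_rhs => rw [← hfk n hnmem]
      ring
    rw [← mul_smul, hz]
    exact zero_smul (Polynomial R ⧸ I) y
  · intro hx
    refine ⟨x, ?_⟩
    have hvanish : ∀ k ∈ n.divisors, k ≠ n → psi n R k • x = 0 := by
      intro k hk hkn
      obtain ⟨c, hc⟩ : cyclotomic n R ∣ (f /ₘ cyclotomic k R) := by
        rw [hg k hk]
        exact Finset.dvd_prod_of_mem _ (Finset.mem_erase.mpr ⟨(Ne.symm hkn), hnmem⟩)
      have : psi n R k = Ideal.Quotient.mk I (C u * X * c * derivative (cyclotomic k R)) *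
          Ideal.Quotient.mk I (cyclotomic n R) := by
        show Ideal.Quotient.mk I _ = _
        rw [← map_mul]
        congr 1
        rw [hc]; ring
      rw [this, mul_smul, hx, smul_zero]
    calc x = (1 : Polynomial R ⧸ I) • x := (one_smul _ x).symm
      _ = (∑ k ∈ n.divisors, psi n R k) • x := by rw [hsum]
      _ = ∑ k ∈ n.divisors, psi n R k • x := Finset.sum_smul
      _ = psi n R n • x := Finset.sum_eq_single n hvanish (fun h => absurd hnmem h)
end

section
/- Let p be a prime and m ≥ 1. Given f ∈ Z[ζ_{p^m}] = Z[t]/(Φ_{p^m}) and h ∈ Z[t]/(t^{p^{m-1}}-1) with [f] = π(h) in Z[t]/(t^{p^{m-1}}-1, p), there exists F ∈ Z[t]/(t^{p^m}-1) such that F reduces to f modulo Φ_{p^m} and F restricts to h in Z[t]/(t^{p^{m-1}}-1). -/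
open Polynomial

/-- Let `p` be prime and `m ≥ 1`. Given `f ∈ ℤ[ζ_{p^m}] = ℤ[t]/(Φ_{p^m})` and
`h ∈ ℤ[t]/(t^{p^{m-1}} - 1)` that agree in `ℤ[t]/(t^{p^{m-1}} - 1, p)` (i.e.
`[f] = π(h)`), there exists `F ∈ ℤ[t]/(t^{p^m} - 1)` reducing to `f` modulo `Φ_{p^m}`
and restricting to `h` in `ℤ[t]/(t^{p^{m-1}} - 1)`. -/
theorem stmt_16 (p m : ℕ) (hp : p.Prime) (hm : 1 ≤ m) (f h : ℤ[X])
    (hfh : Ideal.Quotient.mk (Ideal.span {(X : ℤ[X]) ^ (p ^ (m - 1)) - 1, C (p : ℤ)}) f =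
      Ideal.Quotient.mk (Ideal.span {(X : ℤ[X]) ^ (p ^ (m - 1)) - 1, C (p : ℤ)}) h) :
    ∃ F : ℤ[X],
      Ideal.Quotient.mk (Ideal.span {cyclotomic (p ^ m) ℤ}) F =
        Ideal.Quotient.mk (Ideal.span {cyclotomic (p ^ m) ℤ}) f ∧
      Ideal.Quotient.mk (Ideal.span {(X : ℤ[X]) ^ (p ^ (m - 1)) - 1}) F =
        Ideal.Quotient.mk (Ideal.span {(X : ℤ[X]) ^ (p ^ (m - 1)) - 1}) h := by
  set q : ℕ := p ^ (m - 1) with hq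
  -- extract coefficients
  rw [Ideal.Quotient.eq] at hfh
  rw [Ideal.mem_span_pair] at hfh
  obtain ⟨a, b, hab⟩ := hfh
  -- key divisibility: (X^q - 1) ∣ cyclotomic (p^m) ℤ - C p
  have hm' : m = (m - 1) + 1 := (Nat.succ_pred_eq_of_pos hm).symm
  have hcyc : cyclotomic (p ^ m) ℤ = ∑ i ∈ Finset.range p, ((X : ℤ[X]) ^ q) ^ i := by
    rw [hm']; exact cyclotomic_prime_pow_eq_geom_sum hp
  have hdvd : ((X : ℤ[X]) ^ q - 1) ∣ cyclotomic (p ^ m) ℤ - C (p : ℤ) := by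
    have : (C (p : ℤ) : ℤ[X]) = ∑ _i ∈ Finset.range p, (1 : ℤ[X]) := by
      simp [Polynomial.C_eq_natCast]
    rw [hcyc, this, ← Finset.sum_sub_distrib]
    refine Finset.dvd_sum fun i _ => ?_
    have := sub_dvd_pow_sub_pow ((X : ℤ[X]) ^ q) 1 i
    simpa using this
  refine ⟨f - b * cyclotomic (p ^ m) ℤ, ?_, ?_⟩
  · rw [Ideal.Quotient.eq]
    have : f - b * cyclotomic (p ^ m) ℤ - f = (-b) * cyclotomic (p ^ m) ℤ := by ring
    rw [this]
    exact Ideal.mul_mem_left _ _ (Ideal.subset_span rfl)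
  · rw [Ideal.Quotient.eq, Ideal.mem_span_singleton]
    obtain ⟨c, hc⟩ := hdvd
    have : f - b * cyclotomic (p ^ m) ℤ - h =
        ((X : ℤ[X]) ^ q - 1) * (a - b * c) := by
      have h1 : cyclotomic (p ^ m) ℤ = ((X : ℤ[X]) ^ q - 1) * c + C (p : ℤ) := by
        linear_combination hc
      rw [h1]; linear_combination -hab
    rw [this]
    exact Dvd.intro _ rfl
end

section
/- Let R be a Dedekind domain whose ideal class group is torsion. Then every overring of R (subring of Frac(R) containing R) is a localization R_S for some multiplicative subset S ⊆ R. -/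
/-- Let `R` be a Dedekind domain whose ideal class group is torsion. Then every overring
of `R` (subring of `Frac(R)` containing `R`) is a localization of `R` at some
multiplicative subset `S ⊆ R`. -/
theorem stmt_17 (R : Type) [CommRing R] [IsDomain R] [IsDedekindDomain R]
    (htors : Monoid.IsTorsion (ClassGroup R))
    (A : Subalgebra R (FractionRing R)) :
    ∃ S : Submonoid R, IsLocalization S A := by
  classical
  set K := FractionRing R
  -- the multiplicative set of elements becoming units in A
  set S : Submonoid R := Submonoid.comap (algebraMap R A) (IsUnit.submonoid A) with hS
  refine ⟨S, ?_, ?_, ?_⟩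
  · rintro ⟨s, hs⟩
    exact hs
  · rintro z
    -- the fractional ideal generated by 1 and z
    set I : FractionalIdeal (nonZeroDivisors R) K :=
      1 + FractionalIdeal.spanSingleton (nonZeroDivisors R) (z : K) with hI
    have h1I : (1 : FractionalIdeal (nonZeroDivisors R) K) ≤ I := by
      rw [hI, ← FractionalIdeal.sup_eq_add]; exact le_sup_left
    have hIne : I ≠ 0 := fun h => by
      simp [h] at h1I
    have hzI : (z : K) ∈ I := by
      have hle : FractionalIdeal.spanSingleton (nonZeroDivisors R) (z : K) ≤ I := by
        rw [hI, ← FractionalIdeal.sup_eq_add]; exact le_sup_right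
      exact SetLike.le_def.mp hle (FractionalIdeal.mem_spanSingleton_self _ _)
    -- I ≤ A as subsets of K
    have hIA : ∀ x ∈ I, x ∈ A := by
      intro x hx
      rw [hI, FractionalIdeal.mem_add] at hx
      obtain ⟨y, hy, w, hw, rfl⟩ := hx
      obtain ⟨r, rfl⟩ := (FractionalIdeal.mem_one_iff _).mp hy
      obtain ⟨t, rfl⟩ := (FractionalIdeal.mem_spanSingleton _).mp hw
      refine A.add_mem (A.algebraMap_mem r) ?_
      rw [Algebra.smul_def]
      exact A.mul_mem (A.algebraMap_mem t) z.2
    have hIpow : ∀ k, ∀ x ∈ I ^ k, x ∈ A := by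
      intro k
      induction k with
      | zero =>
        intro x hx
        rw [pow_zero] at hx
        obtain ⟨r, rfl⟩ := (FractionalIdeal.mem_one_iff _).mp hx
        exact A.algebraMap_mem r
      | succ k ih =>
        intro x hx
        rw [pow_succ] at hx
        refine FractionalIdeal.mul_induction_on hx ?_ ?_
        · intro a ha b hb
          exact A.mul_mem (ih a ha) (hIA b hb)
        · intro a b ha hb
          exact A.add_mem ha hb
    -- I^n is principal for some n > 0
    obtain ⟨n, hn, c, hc⟩ : ∃ n : ℕ, n ≠ 0 ∧ ∃ c : K,
        I ^ n = FractionalIdeal.spanSingleton (nonZeroDivisors R) c := by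
      have hfin := htors (ClassGroup.mk K (Units.mk0 I hIne))
      refine ⟨orderOf (ClassGroup.mk K (Units.mk0 I hIne)), hfin.orderOf_pos.ne', ?_⟩
      have h1 : ClassGroup.mk K ((Units.mk0 I hIne) ^
          orderOf (ClassGroup.mk K (Units.mk0 I hIne))) = 1 := by
        rw [map_pow, pow_orderOf_eq_one]
      obtain ⟨c, hc⟩ := (ClassGroup.mk_eq_one_iff.mp h1).principal
      refine ⟨c, ?_⟩
      apply FractionalIdeal.coeToSubmodule_injective
      show _ = (FractionalIdeal.spanSingleton (nonZeroDivisors R) c : Submodule R K)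
      rw [FractionalIdeal.coe_spanSingleton, ← hc, Units.val_pow_eq_pow_val, Units.val_mk0]
    -- basic consequences
    have h1pow : ∀ k, (1 : K) ∈ I ^ k := by
      intro k
      induction k with
      | zero => rw [pow_zero]; exact FractionalIdeal.one_mem_one _
      | succ k ih =>
        rw [pow_succ, ← mul_one (1 : K)]
        exact FractionalIdeal.mul_mem_mul ih (SetLike.le_def.mp h1I (FractionalIdeal.one_mem_one _))
    have h1 : (1 : K) ∈ I ^ n := h1pow n
    have hz : (z : K) ∈ I ^ n := by
      obtain ⟨k, rfl⟩ := Nat.exists_eq_succ_of_ne_zero hn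
      rw [pow_succ, ← one_mul (z : K)]
      exact FractionalIdeal.mul_mem_mul (h1pow k) hzI
    have hIpown := hIpow n
    rw [hc] at h1 hz hIpown
    obtain ⟨d, hd⟩ := (FractionalIdeal.mem_spanSingleton _).mp h1
    obtain ⟨m, hm⟩ := (FractionalIdeal.mem_spanSingleton _).mp hz
    have hcA : c ∈ A := hIpown c (FractionalIdeal.mem_spanSingleton_self _ _)
    have hdc : algebraMap R K d * c = 1 := by rw [← Algebra.smul_def]; exact hd
    have hdS : d ∈ S := by
      refine IsUnit.of_mul_eq_one ⟨c, hcA⟩ ?_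
      ext
      push_cast
      exact hdc
    refine ⟨⟨m, ⟨d, hdS⟩⟩, ?_⟩
    ext
    push_cast
    calc (z : K) * algebraMap R K d = (m • c) * algebraMap R K d := by rw [hm]
      _ = algebraMap R K m * (algebraMap R K d * c) := by
          rw [Algebra.smul_def]; ring
      _ = algebraMap R K m := by rw [hdc, mul_one]
  · intro r₁ r₂ h
    refine ⟨1, ?_⟩
    have : algebraMap R K r₁ = algebraMap R K r₂ := by
      have := congrArg (Subtype.val) h
      simpa using this
    simpa using IsFractionRing.injective R K this
end
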